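/- (One-step bound for the modified qRK iteration.) Let β < q < 1 − β with qm and βm integers. Suppose A x* = b_t, η, ξ ∈ ℝ^m with supp(η) ∩ supp(ξ) = ∅ and ‖ξ‖₀ ≤ βm, and b = b_t + η + ξ. Assume (q/(q−β))·(βm/σ_max(A)² + 2β/(1 − q − β) + 4β√m/(σ_max(A)·√(1 − q − β))) < σ_{q−β,min}(A)²/σ_max(A)². For any x_k ∈ ℝⁿ, let B be a set of exactly qm indices with |r_j| ≤ Q for all j ∈ B, containing every j with |r_j| < Q, and for i ∈ B define x_{k+1}(i) := x_k + ((b_t + ξ)_i − ⟨x_k, a_i⟩)·a_i. Then (1/(qm)) Σ_{i∈B} ‖x_{k+1}(i) − x*‖² ≤ (1 − C)·‖x_k − x*‖² + (2β(1 − q)/(q(1 − q − β)))·‖η‖_∞², where C := (q − β)·σ_{q−β,min}(A)²/(q² m) − (β/q)·(1 + 2σ_max(A)²/(m(1 − q − β)) + 4σ_max(A)/(√m·√(1 − q − β))), and C > 0. -/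

import Mathlib

open Finset

/-- Largest singular value of `A`, as the operator norm of the associated
Euclidean linear map. -/
noncomputable def sigmaMax {m n : ℕ} (A : Matrix (Fin m) (Fin n) ℝ) : ℝ :=
  ‖LinearMap.toContinuousLinearMap (Matrix.toEuclideanLin A)‖

/-- `sigmaSMin A k` is the minimum over all index sets `I` of cardinality `k`
of the smallest value of `‖A_I x‖` over unit vectors `x`. -/
noncomputable def sigmaSMin {m n : ℕ} (A : Matrix (Fin m) (Fin n) ℝ) (k : ℕ) : ℝ :=
  sInf {t : ℝ | ∃ I : Finset (Fin m), I.card = k ∧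
    t = sInf {u : ℝ | ∃ x : EuclideanSpace ℝ (Fin n), ‖x‖ = 1 ∧
      u = Real.sqrt (∑ i ∈ I, (A.mulVec (fun k => x k) i) ^ 2)}}

/-- The `j`-th row of `A`, as a vector in Euclidean space. -/
noncomputable def row {m n : ℕ} (A : Matrix (Fin m) (Fin n) ℝ) (j : Fin m) :
    EuclideanSpace ℝ (Fin n) := WithLp.toLp 2 (fun k => A j k)

/-- Residual `r_j = b_j - ⟨x, a_j⟩`. -/
noncomputable def resid {m n : ℕ} (A : Matrix (Fin m) (Fin n) ℝ) (b : Fin m → ℝ)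
    (x : EuclideanSpace ℝ (Fin n)) (j : Fin m) : ℝ :=
  b j - ∑ k, x k * A j k

/-- `IsQuantile f k Q` says `Q` is the `k`-th smallest value (1-indexed,
counted with multiplicity) of the multiset `{f j}`. -/
def IsQuantile {m : ℕ} (f : Fin m → ℝ) (k : ℕ) (Q : ℝ) : Prop :=
  k ≤ (Finset.univ.filter fun j => f j ≤ Q).card ∧
  (Finset.univ.filter fun j => f j < Q).card < k

open RealInnerProductSpace
open scoped Matrix

/-! With `e = x_k - x*`, `d = A e` and unit rows, one step onto the `ξ`-corrupted system gives
`‖x_{k+1}(i) - x*‖² = ‖e‖² - d_i² + ξ_i²`. Summed over `B`, the at least `qm - βm` uncorrupted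
rows contribute `∑ d_i² ≥ σ_{q-β,min}² ‖e‖²`, while each of the at most `βm` corrupted rows costs
at most `Q² + 2Q‖e‖`, since its residual `ξ_i - d_i` is at most `Q` and `|d_i| ≤ ‖e‖`. At least
`(1 - q - β)m` uncorrupted rows lie outside `B`, where `|η_j - d_j| ≥ Q`; comparing with
`∑ d_j² ≤ σ_max² ‖e‖²` gives `Q ≤ ‖η‖_∞ + σ_max ‖e‖ / √((1 - q - β)m)`, and the rest is algebra. -/

theorem norm_add_smul_sub_inner_sq {E : Type*} [NormedAddCommGroup E] [InnerProductSpace ℝ E]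
    {a : E} (ha : ‖a‖ = 1) (e : E) (c : ℝ) :
    ‖e + (c - ⟪e, a⟫) • a‖ ^ 2 = ‖e‖ ^ 2 - ⟪e, a⟫ ^ 2 + c ^ 2 := by
  rw [norm_add_sq_real, real_inner_smul_right, norm_smul, ha, Real.norm_eq_abs, mul_one, sq_abs]
  ring

theorem sq_sub_sq_le_of_abs_sub_le {x y Q t : ℝ} (hxy : |x - y| ≤ Q) (hy : |y| ≤ t) :
    x ^ 2 - y ^ 2 ≤ Q ^ 2 + 2 * Q * t := by
  have hsq : (x - y) ^ 2 ≤ Q ^ 2 := sq_le_sq' (abs_le.mp hxy).1 (abs_le.mp hxy).2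
  have hmul : (x - y) * y ≤ Q * t := calc
    (x - y) * y ≤ |x - y| * |y| := by rw [← abs_mul]; exact le_abs_self _
    _ ≤ Q * t := mul_le_mul hxy hy (abs_nonneg _) ((abs_nonneg _).trans hxy)
  linarith [show x ^ 2 - y ^ 2 = (x - y) ^ 2 + 2 * ((x - y) * y) by ring]

theorem card_mul_sq_le_sum_sq {ι : Type*} (s : Finset ι) (f : ι → ℝ) {θ : ℝ} (hθ : 0 ≤ θ)
    (h : ∀ j ∈ s, θ ≤ |f j|) : #s * θ ^ 2 ≤ ∑ j ∈ s, f j ^ 2 := by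
  simpa using card_nsmul_le_sum s (f · ^ 2) (θ ^ 2) fun j hj ↦
    sq_abs (f j) ▸ pow_le_pow_left₀ hθ (h j hj) 2

theorem sq_add_two_mul_le_of_le_add {Q a g t : ℝ} (hQ : 0 ≤ Q) (ht : 0 ≤ t) (hQag : Q ≤ a + g) :
    Q ^ 2 + 2 * Q * t ≤ t ^ 2 + 2 * g ^ 2 + 4 * g * t + 2 * a ^ 2 := by
  nlinarith [sq_nonneg (t + g - a)]

section Matrix

variable {m n : ℕ} {A : Matrix (Fin m) (Fin n) ℝ}

theorem inner_row (x : EuclideanSpace ℝ (Fin n)) (j : Fin m) : ⟪x, row A j⟫ = (A *ᵥ x) j := by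
  simp [row, PiLp.inner_apply, Matrix.mulVec, dotProduct]

theorem norm_row (hrow : ∀ j, ∑ k, A j k ^ 2 = 1) (j : Fin m) : ‖row A j‖ = 1 := by
  simp [EuclideanSpace.norm_eq, row, hrow]

theorem abs_mulVec_le (hrow : ∀ j, ∑ k, A j k ^ 2 = 1) (x : EuclideanSpace ℝ (Fin n)) (j : Fin m) :
    |(A *ᵥ x) j| ≤ ‖x‖ := by
  simpa [inner_row, norm_row hrow] using abs_real_inner_le_norm x (row A j)

theorem resid_add_mulVec (x y : EuclideanSpace ℝ (Fin n)) (v : Fin m → ℝ) (j : Fin m) :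
    resid A (A *ᵥ y + v) x j = v j - (A *ᵥ (x - y)) j := by
  simp [resid, Matrix.mulVec, dotProduct, mul_sub, mul_comm]
  ring

theorem norm_kaczmarz_step_sub_sq (hrow : ∀ j, ∑ k, A j k ^ 2 = 1)
    (x y : EuclideanSpace ℝ (Fin n)) (v : Fin m → ℝ) (i : Fin m) :
    ‖x + resid A (A *ᵥ y + v) x i • row A i - y‖ ^ 2 =
      ‖x - y‖ ^ 2 - (A *ᵥ (x - y)) i ^ 2 + v i ^ 2 := by
  have h : ⟪x - y, row A i⟫ = (A *ᵥ (x - y)) i := inner_row (x - y) i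
  rw [add_sub_right_comm, resid_add_mulVec, ← h, norm_add_smul_sub_inner_sq (norm_row hrow i)]

theorem sum_sq_mulVec_le (A : Matrix (Fin m) (Fin n) ℝ) (x : EuclideanSpace ℝ (Fin n)) :
    ∑ j, (A *ᵥ x) j ^ 2 ≤ sigmaMax A ^ 2 * ‖x‖ ^ 2 := by
  have hop := (LinearMap.toContinuousLinearMap (Matrix.toEuclideanLin A)).le_opNorm x
  have hsq : ‖LinearMap.toContinuousLinearMap (Matrix.toEuclideanLin A) x‖ ^ 2 =
      ∑ j, (A *ᵥ x) j ^ 2 := by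
    simp [EuclideanSpace.norm_sq_eq, Matrix.toLpLin_apply]
  rw [← hsq, ← mul_pow]
  exact pow_le_pow_left₀ (norm_nonneg _) hop 2

end Matrix

section Sigma

variable {m n : ℕ}

theorem sigmaSMin_nonneg (A : Matrix (Fin m) (Fin n) ℝ) (k : ℕ) : 0 ≤ sigmaSMin A k :=
  Real.sInf_nonneg fun _ ⟨_, _, ht⟩ ↦
    ht ▸ Real.sInf_nonneg fun _ ⟨_, _, hu⟩ ↦ hu ▸ Real.sqrt_nonneg _

theorem sigmaSMin_le_sqrt (A : Matrix (Fin m) (Fin n) ℝ) {I : Finset (Fin m)} {k : ℕ} (hI : #I = k)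
    {x : EuclideanSpace ℝ (Fin n)} (hx : ‖x‖ = 1) :
    sigmaSMin A k ≤ √(∑ i ∈ I, (A *ᵥ x) i ^ 2) := by
  refine le_trans (csInf_le ⟨0, ?_⟩ ⟨I, hI, rfl⟩) (csInf_le ⟨0, ?_⟩ ⟨x, hx, rfl⟩)
  · rintro _ ⟨J, -, rfl⟩
    exact Real.sInf_nonneg fun _ ⟨_, _, hu⟩ ↦ hu ▸ Real.sqrt_nonneg _
  · rintro _ ⟨y, -, rfl⟩
    exact Real.sqrt_nonneg _

theorem sigmaSMin_sq_mul_le (A : Matrix (Fin m) (Fin n) ℝ) {I : Finset (Fin m)} {k : ℕ}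
    (hk : k ≤ #I) (x : EuclideanSpace ℝ (Fin n)) :
    sigmaSMin A k ^ 2 * ‖x‖ ^ 2 ≤ ∑ i ∈ I, (A *ᵥ x) i ^ 2 := by
  obtain ⟨J, hJI, hJ⟩ := exists_subset_card_eq hk
  refine le_trans ?_ (sum_le_sum_of_subset_of_nonneg hJI fun _ _ _ ↦ sq_nonneg _)
  rcases eq_or_ne x 0 with rfl | hx
  · simp
  have hxpos : 0 < ‖x‖ := norm_pos_iff.mpr hx
  have hu : ‖‖x‖⁻¹ • x‖ = 1 := by rw [norm_smul, norm_inv, norm_norm, inv_mul_cancel₀ hxpos.ne']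
  have h := sigmaSMin_le_sqrt A hJ hu
  simp only [WithLp.ofLp_smul, Matrix.mulVec_smul, Pi.smul_apply, smul_eq_mul, mul_pow,
    ← mul_sum, Real.sqrt_mul (sq_nonneg _), Real.sqrt_sq (inv_nonneg.mpr hxpos.le)] at h
  rw [← mul_pow, ← Real.sq_sqrt (sum_nonneg fun _ _ ↦ sq_nonneg _)]
  refine pow_le_pow_left₀ (mul_nonneg (sigmaSMin_nonneg A k) hxpos.le) ?_ 2
  rw [mul_comm]
  exact (le_inv_mul_iff₀ hxpos).mp h

end Sigma

section Threshold

variable {m n : ℕ}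

theorem card_le_card_add_card_filter_add_card_compl_filter {α : Type*} [Fintype α]
    [DecidableEq α] (B : Finset α) (p : α → Prop) [DecidablePred p] :
    Fintype.card α ≤ #B + #{j | ¬ p j} + #(Bᶜ.filter p) := by
  have hcompl : #Bᶜ = Fintype.card α - #B := card_compl B
  have hsplit := card_filter_add_card_filter_not (s := Bᶜ) p
  have hsub : #(Bᶜ.filter (¬ p ·)) ≤ #{j | ¬ p j} :=
    card_le_card (filter_subset_filter _ (subset_univ _))
  have hB := card_le_univ B
  omega

theorem threshold_le_of_residual_lt_imp_mem (A : Matrix (Fin m) (Fin n) ℝ)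
    {x y : EuclideanSpace ℝ (Fin n)} {η ξ : Fin m → ℝ} {B : Finset (Fin m)} {Q c : ℝ}
    (hB : ∀ j, |resid A (A *ᵥ y + (η + ξ)) x j| < Q → j ∈ B) (hc : 0 < c)
    (hcard : c ≤ m - #B - #{j | ξ j ≠ 0}) :
    Q ≤ ‖η‖ + sigmaMax A * ‖x - y‖ / √c := by
  have hσt : 0 ≤ sigmaMax A * ‖x - y‖ := mul_nonneg (norm_nonneg _) (norm_nonneg _)
  rcases le_or_gt Q ‖η‖ with hQ | hQ
  · have := div_nonneg hσt (Real.sqrt_nonneg c)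
    linarith
  set U := Bᶜ.filter fun j ↦ ξ j = 0
  have hU : c ≤ #U := by
    have := card_le_card_add_card_filter_add_card_compl_filter B (fun j ↦ ξ j = 0)
    rw [Fintype.card_fin] at this
    have : (m : ℝ) ≤ #B + #{j | ξ j ≠ 0} + #U := by exact_mod_cast this
    linarith
  have hθ : ∀ j ∈ U, Q - ‖η‖ ≤ |(A *ᵥ (x - y)) j| := by
    intro j hj
    obtain ⟨hjB, hξj⟩ := mem_filter.mp hj
    have hres := not_lt.mp (mt (hB j) (mem_compl.mp hjB))
    rw [resid_add_mulVec, Pi.add_apply, hξj, add_zero] at hres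
    have hη : |η j| ≤ ‖η‖ := by simpa using norm_le_pi_norm η j
    linarith [abs_sub (η j) ((A *ᵥ (x - y)) j)]
  have hsq : ((Q - ‖η‖) * √c) ^ 2 ≤ (sigmaMax A * ‖x - y‖) ^ 2 := calc
    ((Q - ‖η‖) * √c) ^ 2 = c * (Q - ‖η‖) ^ 2 := by rw [mul_pow, Real.sq_sqrt hc.le, mul_comm]
    _ ≤ #U * (Q - ‖η‖) ^ 2 := mul_le_mul_of_nonneg_right hU (sq_nonneg _)
    _ ≤ ∑ j ∈ U, (A *ᵥ (x - y)) j ^ 2 := card_mul_sq_le_sum_sq U _ (by linarith) hθ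
    _ ≤ ∑ j, (A *ᵥ (x - y)) j ^ 2 :=
        sum_le_sum_of_subset_of_nonneg (subset_univ U) fun _ _ _ ↦ sq_nonneg _
    _ ≤ sigmaMax A ^ 2 * ‖x - y‖ ^ 2 := sum_sq_mulVec_le A (x - y)
    _ = (sigmaMax A * ‖x - y‖) ^ 2 := (mul_pow _ _ _).symm
  have hle := (pow_le_pow_iff_left₀ (by positivity) hσt two_ne_zero).mp hsq
  have := (le_div_iff₀ (Real.sqrt_pos.mpr hc)).mpr hle
  linarith

end Threshold

section Step

variable {m n : ℕ} {A : Matrix (Fin m) (Fin n) ℝ}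

theorem sum_norm_kaczmarz_step_sub_sq_le (hrow : ∀ j, ∑ k, A j k ^ 2 = 1)
    {x y : EuclideanSpace ℝ (Fin n)} {η ξ : Fin m → ℝ} (hdisj : ∀ j, η j = 0 ∨ ξ j = 0)
    {kβ : ℕ} (hsparse : #{j | ξ j ≠ 0} ≤ kβ) {B : Finset (Fin m)} {Q : ℝ} (hQ : 0 ≤ Q)
    (hBQ : ∀ j ∈ B, |resid A (A *ᵥ y + (η + ξ)) x j| ≤ Q) :
    ∑ i ∈ B, ‖x + resid A (A *ᵥ y + ξ) x i • row A i - y‖ ^ 2 ≤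
      (#B - sigmaSMin A (#B - kβ) ^ 2) * ‖x - y‖ ^ 2 + kβ * (Q ^ 2 + 2 * Q * ‖x - y‖) := by
  set t := ‖x - y‖
  set d := A *ᵥ (x - y)
  set G := B.filter fun j ↦ ξ j = 0
  set K := B.filter fun j ↦ ¬ ξ j = 0
  have hK : #K ≤ kβ := (card_le_card (filter_subset_filter _ (subset_univ B))).trans hsparse
  have hGK : #G + #K = #B := card_filter_add_card_filter_not _
  have hG : sigmaSMin A (#B - kβ) ^ 2 * t ^ 2 ≤ ∑ i ∈ G, d i ^ 2 :=
    sigmaSMin_sq_mul_le A (by omega) (x - y)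
  have hGsum : ∑ i ∈ G, (t ^ 2 - d i ^ 2 + ξ i ^ 2) = #G * t ^ 2 - ∑ i ∈ G, d i ^ 2 := by
    rw [sum_congr rfl fun i hi ↦ by rw [(mem_filter.mp hi).2]]
    simp [sum_sub_distrib]
  have hKsum : ∑ i ∈ K, (t ^ 2 - d i ^ 2 + ξ i ^ 2) ≤ #K * (t ^ 2 + (Q ^ 2 + 2 * Q * t)) := by
    refine (sum_le_card_nsmul K _ _ fun i hi ↦ ?_).trans_eq (nsmul_eq_mul _ _)
    obtain ⟨hiB, hξi⟩ := mem_filter.mp hi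
    have hres := hBQ i hiB
    rw [resid_add_mulVec, Pi.add_apply, (hdisj i).resolve_right hξi, zero_add] at hres
    linarith [sq_sub_sq_le_of_abs_sub_le hres (abs_mulVec_le hrow (x - y) i)]
  have hKβ : (#K : ℝ) * (Q ^ 2 + 2 * Q * t) ≤ kβ * (Q ^ 2 + 2 * Q * t) :=
    mul_le_mul_of_nonneg_right (by exact_mod_cast hK) (by positivity)
  calc ∑ i ∈ B, ‖x + resid A (A *ᵥ y + ξ) x i • row A i - y‖ ^ 2
      = ∑ i ∈ B, (t ^ 2 - d i ^ 2 + ξ i ^ 2) :=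
        sum_congr rfl fun i _ ↦ norm_kaczmarz_step_sub_sq hrow x y ξ i
    _ = ∑ i ∈ G, (t ^ 2 - d i ^ 2 + ξ i ^ 2) + ∑ i ∈ K, (t ^ 2 - d i ^ 2 + ξ i ^ 2) :=
        (sum_filter_add_sum_filter_not _ _ _).symm
    _ ≤ _ := by
        have : (#G : ℝ) + #K = #B := by exact_mod_cast hGK
        nlinarith

end Step

noncomputable def qrkRate (q β m S σ : ℝ) : ℝ :=
  (q - β) * S ^ 2 / (q ^ 2 * m) -
    (β / q) * (1 + 2 * σ ^ 2 / (m * (1 - q - β)) + 4 * σ / (√m * √(1 - q - β)))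

theorem qrkRate_pos {q β m S σ : ℝ} (hβ : 0 ≤ β) (hβq : β < q) (hL : 0 < 1 - q - β) (hm : 0 < m)
    (hσ : 0 ≤ σ)
    (hcond : (q / (q - β)) * (β * m / σ ^ 2 + 2 * β / (1 - q - β) +
        4 * β * √m / (σ * √(1 - q - β))) < S ^ 2 / σ ^ 2) :
    0 < qrkRate q β m S σ := by
  have hq : 0 < q := hβ.trans_lt hβq
  have hqβ : 0 < q - β := sub_pos.mpr hβq
  have hσ : 0 < σ := by
    refine hσ.lt_of_ne fun h ↦ ?_
    -- at `σ = 0` both divisions by `σ` in `hcond` are junk zeros, leaving `0 ≤ … < 0`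
    subst h
    simp only [ne_eq, OfNat.ofNat_ne_zero, not_false_eq_true, zero_pow, zero_mul, div_zero,
      zero_add, add_zero] at hcond
    have : 0 ≤ q / (q - β) * (2 * β / (1 - q - β)) := by positivity
    linarith
  obtain ⟨r, hr, rfl⟩ : ∃ r, 0 < r ∧ r ^ 2 = m := ⟨√m, Real.sqrt_pos.mpr hm, Real.sq_sqrt hm.le⟩
  rw [Real.sqrt_sq hr.le] at hcond
  have hrate : qrkRate q β (r ^ 2) S σ = (q - β) * σ ^ 2 / (q ^ 2 * r ^ 2) * (S ^ 2 / σ ^ 2 -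
      (q / (q - β)) * (β * r ^ 2 / σ ^ 2 + 2 * β / (1 - q - β) +
        4 * β * r / (σ * √(1 - q - β)))) := by
    rw [qrkRate, Real.sqrt_sq hr.le]
    field_simp
  rw [hrate]
  exact mul_pos (by positivity) (sub_pos.mpr hcond)

theorem one_div_mul_le_one_sub_qrkRate_mul_add {q β m S σ t a Q s : ℝ} (hβ : 0 ≤ β) (hβq : β < q)
    (hL : 0 < 1 - q - β) (hm : 0 < m) (ht : 0 ≤ t) (hQ : 0 ≤ Q)
    (hQle : Q ≤ a + σ * t / (√m * √(1 - q - β)))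
    (hs : s ≤ (q * m - S ^ 2) * t ^ 2 + β * m * (Q ^ 2 + 2 * Q * t)) :
    1 / (q * m) * s ≤
      (1 - qrkRate q β m S σ) * t ^ 2 + 2 * β * (1 - q) / (q * (1 - q - β)) * a ^ 2 := by
  have hq : 0 < q := hβ.trans_lt hβq
  set g := σ * t / (√m * √(1 - q - β)) with hg
  have hg2 : g ^ 2 = σ ^ 2 * t ^ 2 / (m * (1 - q - β)) := by
    rw [hg, div_pow, mul_pow, mul_pow, Real.sq_sqrt hm.le, Real.sq_sqrt hL.le]
  have hQbound := mul_le_mul_of_nonneg_left (sq_add_two_mul_le_of_le_add hQ ht hQle)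
    (by positivity : 0 ≤ β * m)
  rw [hg2] at hQbound
  have hS : (q - β) / q * S ^ 2 * t ^ 2 ≤ S ^ 2 * t ^ 2 := by
    have : (q - β) / q ≤ 1 := (div_le_one hq).mpr (by linarith)
    simpa using mul_le_mul_of_nonneg_right (mul_le_mul_of_nonneg_right this (sq_nonneg S))
      (sq_nonneg t)
  have ha : 2 * β * m * a ^ 2 ≤ 2 * β * m * (1 - q) / (1 - q - β) * a ^ 2 := by
    have h := mul_le_mul_of_nonneg_left ((one_le_div hL).mpr (by linarith : 1 - q - β ≤ 1 - q))
      (by positivity : 0 ≤ 2 * β * m * a ^ 2)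
    linarith [show 2 * β * m * (1 - q) / (1 - q - β) * a ^ 2 =
      2 * β * m * a ^ 2 * ((1 - q) / (1 - q - β)) by ring]
  have hexpand : q * m * ((1 - qrkRate q β m S σ) * t ^ 2 +
      2 * β * (1 - q) / (q * (1 - q - β)) * a ^ 2) = q * m * t ^ 2 - (q - β) / q * S ^ 2 * t ^ 2 +
      β * m * (t ^ 2 + 2 * (σ ^ 2 * t ^ 2 / (m * (1 - q - β))) + 4 * g * t) +
      2 * β * m * (1 - q) / (1 - q - β) * a ^ 2 := by
    rw [qrkRate, hg]
    field_simp
    ring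
  rw [one_div_mul_eq_div, div_le_iff₀ (by positivity), mul_comm, hexpand]
  linarith

theorem qrk_modified_one_step_bound_general
    {m n : ℕ} (A : Matrix (Fin m) (Fin n) ℝ)
    (q β : ℝ) (kq kβ : ℕ)
    (hm : 0 < m)
    (hrow : ∀ j, ∑ k, (A j k) ^ 2 = 1)
    (hβq : β < q) (hq1 : q < 1 - β)
    (hkq : (kq : ℝ) = q * m) (hkβ : (kβ : ℝ) = β * m)
    (xstar : EuclideanSpace ℝ (Fin n)) (bt b η ξ : Fin m → ℝ)
    (hsol : A.mulVec (fun k => xstar k) = bt)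
    (hb : b = bt + η + ξ)
    (hsparse : (Finset.univ.filter fun j => ξ j ≠ 0).card ≤ kβ)
    (hdisj : ∀ j, η j = 0 ∨ ξ j = 0)
    (hcond : (q / (q - β)) * (β * m / sigmaMax A ^ 2 + 2 * β / (1 - q - β) +
        4 * β * Real.sqrt m / (sigmaMax A * Real.sqrt (1 - q - β))) <
      sigmaSMin A (kq - kβ) ^ 2 / sigmaMax A ^ 2)
    (xk : EuclideanSpace ℝ (Fin n)) (Q : ℝ)
    (B : Finset (Fin m)) (hBcard : B.card = kq)
    (hBQ : ∀ j ∈ B, |resid A b xk j| ≤ Q)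
    (hBfull : ∀ j, |resid A b xk j| < Q → j ∈ B)
    (C : ℝ)
    (hC : C = (q - β) * sigmaSMin A (kq - kβ) ^ 2 / (q ^ 2 * m) -
      (β / q) * (1 + 2 * sigmaMax A ^ 2 / (m * (1 - q - β)) +
        4 * sigmaMax A / (Real.sqrt m * Real.sqrt (1 - q - β)))) :
    (1 / (q * m)) *
        ∑ i ∈ B, ‖(xk + resid A (bt + ξ) xk i • row A i) - xstar‖ ^ 2 ≤
      (1 - C) * ‖xk - xstar‖ ^ 2 +
        (2 * β * (1 - q) / (q * (1 - q - β))) * ‖η‖ ^ 2 ∧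
    0 < C := by
  subst hsol hb hC hBcard
  rw [add_assoc] at hBQ hBfull
  have hm : (0 : ℝ) < m := Nat.cast_pos.mpr hm
  have hβ : 0 ≤ β := by nlinarith [hkβ ▸ Nat.cast_nonneg (α := ℝ) kβ]
  have hL : 0 < 1 - q - β := by linarith
  have hQ : 0 ≤ Q := by
    have hB : (0 : ℝ) < #B := hkq ▸ mul_pos (hβ.trans_lt hβq) hm
    obtain ⟨j, hj⟩ := card_pos.mp (Nat.cast_pos.mp hB)
    exact (abs_nonneg _).trans (hBQ j hj)
  have hsum := sum_norm_kaczmarz_step_sub_sq_le hrow hdisj hsparse hQ hBQ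
  rw [hkq, hkβ] at hsum
  have hQle := threshold_le_of_residual_lt_imp_mem A hBfull (mul_pos hm hL)
    (by have : (#{j | ξ j ≠ 0} : ℝ) ≤ kβ := by exact_mod_cast hsparse
        linarith)
  rw [Real.sqrt_mul hm.le] at hQle
  exact ⟨one_div_mul_le_one_sub_qrkRate_mul_add hβ hβq hL hm (norm_nonneg _) hQ hQle hsum,
    qrkRate_pos hβ hβq hL hm (norm_nonneg _) hcond⟩

theorem qrk_modified_one_step_bound
    {m n : ℕ} (A : Matrix (Fin m) (Fin n) ℝ)
    (q β : ℝ) (kq kβ : ℕ)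
    (hm : 0 < m) (hmn : n ≤ m) (hrank : A.rank = n)
    (hrow : ∀ j, ∑ k, (A j k) ^ 2 = 1)
    (hβq : β < q) (hq1 : q < 1 - β)
    (hkq : (kq : ℝ) = q * m) (hkβ : (kβ : ℝ) = β * m)
    (xstar : EuclideanSpace ℝ (Fin n)) (bt b η ξ : Fin m → ℝ)
    (hsol : A.mulVec (fun k => xstar k) = bt)
    (hb : b = bt + η + ξ)
    (hsparse : (Finset.univ.filter fun j => ξ j ≠ 0).card ≤ kβ)
    (hdisj : ∀ j, η j = 0 ∨ ξ j = 0)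
    (hcond : (q / (q - β)) * (β * m / sigmaMax A ^ 2 + 2 * β / (1 - q - β) +
        4 * β * Real.sqrt m / (sigmaMax A * Real.sqrt (1 - q - β))) <
      sigmaSMin A (kq - kβ) ^ 2 / sigmaMax A ^ 2)
    (xk : EuclideanSpace ℝ (Fin n)) (Q : ℝ)
    (hQ : IsQuantile (fun j => |resid A b xk j|) kq Q)
    (B : Finset (Fin m)) (hBcard : B.card = kq)
    (hBQ : ∀ j ∈ B, |resid A b xk j| ≤ Q)
    (hBfull : ∀ j, |resid A b xk j| < Q → j ∈ B)
    (C : ℝ)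
    (hC : C = (q - β) * sigmaSMin A (kq - kβ) ^ 2 / (q ^ 2 * m) -
      (β / q) * (1 + 2 * sigmaMax A ^ 2 / (m * (1 - q - β)) +
        4 * sigmaMax A / (Real.sqrt m * Real.sqrt (1 - q - β)))) :
    (1 / (q * m)) *
        ∑ i ∈ B, ‖(xk + resid A (bt + ξ) xk i • row A i) - xstar‖ ^ 2 ≤
      (1 - C) * ‖xk - xstar‖ ^ 2 +
        (2 * β * (1 - q) / (q * (1 - q - β))) * ‖η‖ ^ 2 ∧
    0 < C :=
  qrk_modified_one_step_bound_general A q β kq kβ hm hrow hβq hq1 hkq hkβ xstar bt b η ξ hsol hb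
    hsparse hdisj hcond xk Q B hBcard hBQ hBfull C hC
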